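/- Let X be a compact complex manifold with b₁ = 4, h^{1,0}_{∂̄} = h^{0,1}_{∂̄} = 2 and Aeppli number h^{1,0}_A = 3. Then either H¹_{DR}(X,ℂ) or H²_{DR}(X,ℂ) fails to be pure. -/

import Mathlib

namespace Stmt7

variable {K : Type} [Field K] {V : Type} [AddCommGroup V] [Module K V]

/-- A bigraded double complex structure on `V`: grading `g p q` (the `(p,q)`-forms),
`d1 = ∂`, `d2 = ∂̄`. -/
structure IsBigradedDC (g : ℤ → ℤ → Submodule K V) (d1 d2 : V →ₗ[K] V) : Prop where
  internal : DirectSum.IsInternal (fun pq : ℤ × ℤ => g pq.1 pq.2)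
  d1_sq : ∀ v : V, d1 (d1 v) = 0
  d2_sq : ∀ v : V, d2 (d2 v) = 0
  anticomm : ∀ v : V, d1 (d2 v) + d2 (d1 v) = 0
  d1_mem : ∀ p q : ℤ, ∀ v ∈ g p q, d1 v ∈ g (p + 1) q
  d2_mem : ∀ p q : ℤ, ∀ v ∈ g p q, d2 v ∈ g p (q + 1)

def transpose (g : ℤ → ℤ → Submodule K V) : ℤ → ℤ → Submodule K V := fun p q => g q p

/-- "`d1 x` runs at least `m` times": there are `u₁, …, u_m` with
`∂x = ∂̄u₁, ∂u₁ = ∂̄u₂, …, ∂u_{m-1} = ∂̄u_m` (here `u l` is `u_{l+1}`). -/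
def RunsTimes (g : ℤ → ℤ → Submodule K V) (d1 d2 : V →ₗ[K] V) (m : ℕ) (p q : ℤ) (x : V) :
    Prop :=
  ∃ u : ℕ → V, (∀ l : ℕ, u l ∈ g (p + 1 + (l : ℤ)) (q - 1 - (l : ℤ))) ∧
    (1 ≤ m → d1 x = d2 (u 0)) ∧ ∀ l : ℕ, l + 2 ≤ m → d1 (u l) = d2 (u (l + 1))

/-- `x` (a pure `(p,q)`-form) is `E_r`-closed. -/
def ErClosed (g : ℤ → ℤ → Submodule K V) (d1 d2 : V →ₗ[K] V) (r : ℕ) (p q : ℤ) (x : V) :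
    Prop :=
  d2 x = 0 ∧ RunsTimes g d1 d2 (r - 1) p q x

/-- "`d2 z` reaches `0` in at most `m` steps":
`∂̄z = ∂v_{m-2}, ∂̄v_{m-2} = ∂v_{m-3}, …, ∂̄v₀ = 0` (here `v l` is `v_{m-2-l}`). -/
def ReachesZero (g : ℤ → ℤ → Submodule K V) (d1 d2 : V →ₗ[K] V) (m : ℕ) (p q : ℤ) (z : V) :
    Prop :=
  ∃ v : ℕ → V, (∀ l : ℕ, v l ∈ g (p - 1 - (l : ℤ)) (q + 1 + (l : ℤ))) ∧
    (m = 1 → d2 z = 0) ∧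
    (2 ≤ m → d2 z = d1 (v 0) ∧ d2 (v (m - 2)) = 0 ∧
      ∀ l : ℕ, l + 3 ≤ m → d2 (v l) = d1 (v (l + 1)))

/-- `x` (a pure `(p,q)`-form) is `E_r`-exact. -/
def ErExact (g : ℤ → ℤ → Submodule K V) (d1 d2 : V →ₗ[K] V) (r : ℕ) (p q : ℤ) (x : V) :
    Prop :=
  ∃ z ξ : V, z ∈ g (p - 1) q ∧ ξ ∈ g p (q - 1) ∧ x = d1 z + d2 ξ ∧
    (r = 1 → z = 0) ∧ (2 ≤ r → ReachesZero g d1 d2 (r - 1) (p - 1) q z)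

/-- `x` is `Ē_r`-exact (the conjugate notion: swap `∂` and `∂̄`, transpose the bigrading). -/
def ErBarExact (g : ℤ → ℤ → Submodule K V) (d1 d2 : V →ₗ[K] V) (r : ℕ) (p q : ℤ) (x : V) :
    Prop :=
  ErExact (transpose g) d2 d1 r q p x

/-- `x` is `E_rĒ_r`-closed: both `∂x` and `∂̄x` run at least `r-1` times. -/
def ErErBarClosed (g : ℤ → ℤ → Submodule K V) (d1 d2 : V →ₗ[K] V) (r : ℕ) (p q : ℤ)
    (x : V) : Prop :=
  RunsTimes g d1 d2 (r - 1) p q x ∧ RunsTimes (transpose g) d2 d1 (r - 1) q p x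

/-- `x` is `E_rĒ_r`-exact: `x = ∂z + ∂∂̄ξ + ∂̄η` with `∂̄z` and `∂η`
reaching `0` in at most `r-1` steps. -/
def ErErBarExact (g : ℤ → ℤ → Submodule K V) (d1 d2 : V →ₗ[K] V) (r : ℕ) (p q : ℤ)
    (x : V) : Prop :=
  ∃ z ξ η : V, z ∈ g (p - 1) q ∧ ξ ∈ g (p - 1) (q - 1) ∧ η ∈ g p (q - 1) ∧
    x = d1 z + d1 (d2 ξ) + d2 η ∧
    (r = 1 → z = 0 ∧ η = 0) ∧
    (2 ≤ r → ReachesZero g d1 d2 (r - 1) (p - 1) q z ∧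
      ReachesZero (transpose g) d2 d1 (r - 1) (q - 1) p η)

/-- The total-degree-`k` part of the complex. -/
def TotDeg (g : ℤ → ℤ → Submodule K V) (k : ℤ) : Submodule K V := ⨆ p : ℤ, g p (k - p)

/-- `x` (of total degree `k`) is `d`-exact. -/
def DExact (g : ℤ → ℤ → Submodule K V) (d1 d2 : V →ₗ[K] V) (k : ℤ) (x : V) : Prop :=
  ∃ y ∈ TotDeg g (k - 1), x = d1 y + d2 y

/-- The De Rham cohomology in degree `k` is *full*: every `d`-closed form of total degree
`k` is, modulo `Im d`, a sum of `d`-closed pure-type forms. -/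
def DRFull (g : ℤ → ℤ → Submodule K V) (d1 d2 : V →ₗ[K] V) (k : ℤ) : Prop :=
  ∀ x ∈ TotDeg g k, d1 x + d2 x = 0 →
    ∃ (s : Finset ℤ) (c : ℤ → V),
      (∀ p ∈ s, c p ∈ g p (k - p) ∧ d1 (c p) = 0 ∧ d2 (c p) = 0) ∧
      ∃ y ∈ TotDeg g (k - 1), x = (∑ p ∈ s, c p) + (d1 y + d2 y)

/-- The De Rham cohomology in degree `k` is *pure*: the subspaces `H^{p,q}_{DR}` with
`p + q = k` are in direct sum. -/
def DRPureDeg (g : ℤ → ℤ → Submodule K V) (d1 d2 : V →ₗ[K] V) (k : ℤ) : Prop :=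
  ∀ (s : Finset ℤ) (c : ℤ → V),
    (∀ p ∈ s, c p ∈ g p (k - p) ∧ d1 (c p) = 0 ∧ d2 (c p) = 0) →
    DExact g d1 d2 k (∑ p ∈ s, c p) → ∀ p ∈ s, DExact g d1 d2 k (c p)

/-- Purity of the De Rham cohomology: `H^k_{DR} = ⊕_{p+q=k} H^{p,q}_{DR}` for every `k`. -/
def DRPure (g : ℤ → ℤ → Submodule K V) (d1 d2 : V →ₗ[K] V) : Prop :=
  (∀ k : ℤ, DRFull g d1 d2 k) ∧ ∀ k : ℤ, DRPureDeg g d1 d2 k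

/-- The (column) Frölicher spectral sequence degenerates at `E_r`: from page `r` on, the
spaces of `E_s`-closed and `E_s`-exact pure-type forms stabilise. -/
def DegenAt (g : ℤ → ℤ → Submodule K V) (d1 d2 : V →ₗ[K] V) (r : ℕ) : Prop :=
  ∀ s : ℕ, r ≤ s → ∀ p q : ℤ, ∀ x ∈ g p q,
    (ErClosed g d1 d2 s p q x ↔ ErClosed g d1 d2 (s + 1) p q x) ∧
    (ErExact g d1 d2 s p q x ↔ ErExact g d1 d2 (s + 1) p q x)

/-- `X` is a page-`r`-`∂∂̄`-manifold: the Frölicher spectral sequence degenerates at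
`E_{r+1}` and the De Rham cohomology is pure. -/
def PageDdbar (g : ℤ → ℤ → Submodule K V) (d1 d2 : V →ₗ[K] V) (r : ℕ) : Prop :=
  DegenAt g d1 d2 (r + 1) ∧ DRPure g d1 d2

/-- Dimension of a subquotient `Nm / (Dn ∩ Nm)`. -/
noncomputable def hdim (Nm Dn : Submodule K V) : ℕ :=
  Module.finrank K (↥Nm ⧸ (Dn.comap Nm.subtype))

/-- A real structure (conjugation) on the double complex of forms. -/
structure RealStructure (g : ℤ → ℤ → Submodule K V) (d1 d2 : V →ₗ[K] V) (c : V → V)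
    (σ : K → K) : Prop where
  add : ∀ x y : V, c (x + y) = c x + c y
  smul : ∀ (a : K) (x : V), c (a • x) = σ a • c x
  invol : ∀ x : V, c (c x) = x
  mem : ∀ p q : ℤ, ∀ x ∈ g p q, c x ∈ g q p
  d : ∀ x : V, c (d1 x) = d2 (c x)

/-- The double complex is concentrated in the bidegrees `0 ≤ p, q ≤ n`. -/
def BoundedBy (g : ℤ → ℤ → Submodule K V) (n : ℕ) : Prop :=
  ∀ p q : ℤ, (p < 0 ∨ q < 0 ∨ (n : ℤ) < p ∨ (n : ℤ) < q) → g p q = ⊥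

/-- Dolbeault cohomology dimension `h^{p,q}_{∂̄}`. -/
noncomputable def dolbDim (g : ℤ → ℤ → Submodule K V) (d2 : V →ₗ[K] V) (p q : ℤ) : ℕ :=
  hdim (g p q ⊓ LinearMap.ker d2) (Submodule.map d2 (g p (q - 1)))

/-- Aeppli cohomology dimension `h^{p,q}_A`,
`H^{p,q}_A = (ker ∂∂̄ ∩ C^∞_{p,q})/(Im ∂ + Im ∂̄)`. -/
noncomputable def aeppliDim (g : ℤ → ℤ → Submodule K V) (d1 d2 : V →ₗ[K] V)
    (p q : ℤ) : ℕ :=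
  hdim (g p q ⊓ LinearMap.ker (d1 ∘ₗ d2))
    (Submodule.map d1 (g (p - 1) q) ⊔ Submodule.map d2 (g p (q - 1)))

/-- The `k`-th Betti number `b_k = dim H^k_{DR}`. -/
noncomputable def bettiDim (g : ℤ → ℤ → Submodule K V) (d1 d2 : V →ₗ[K] V) (k : ℤ) : ℕ :=
  hdim (TotDeg g k ⊓ LinearMap.ker (d1 + d2)) (Submodule.map (d1 + d2) (TotDeg g (k - 1)))

/-!
Suppose `H¹` and `H²` are both pure. Sending a `d`-closed `1`-form to the class of its
`(0,1)`-part gives a map `H¹_dR → H^{0,1}_∂̄` whose kernel consists of classes of `d`-closed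
`(1,0)`-forms, a space of dimension at most `h^{1,0}_∂̄ = 2`. As `b₁ = 4 = h^{1,0} + h^{0,1}`,
fullness of `H¹` forces every `∂̄`-closed `(0,1)`-form to be `d`-closed modulo `Im ∂̄`, and by
conjugation every `∂`-closed `(1,0)`-form is `d`-closed modulo `Im ∂`. Purity of `H²` splits a
`∂∂̄`-closed `(1,0)`-form `α` into a `∂̄`-closed and a `∂`-closed part, so every Aeppli class in
bidegree `(1,0)` has a `∂̄`-closed representative and `h^{1,0}_A ≤ h^{1,0}_∂̄ = 2 < 3`.
-/

open Module Submodule LinearMap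

section Projection

variable {ι R M : Type*} [DecidableEq ι] [Ring R] [AddCommGroup M] [Module R M]
  {A : ι → Submodule R M}

noncomputable def _root_.DirectSum.IsInternal.proj (hA : DirectSum.IsInternal A) (i : ι) :
    M →ₗ[R] M :=
  (A i).subtype ∘ₗ DirectSum.component R ι (fun i => A i) i ∘ₗ
    (LinearEquiv.ofBijective (DirectSum.coeLinearMap A) hA).symm.toLinearMap

theorem _root_.DirectSum.IsInternal.proj_of_mem (hA : DirectSum.IsInternal A) {i : ι} {x : M}
    (hx : x ∈ A i) : hA.proj i x = x := by
  simp [DirectSum.IsInternal.proj, ← DirectSum.apply_eq_component,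
    hA.ofBijective_coeLinearMap_of_mem hx]

theorem _root_.DirectSum.IsInternal.proj_of_mem_ne (hA : DirectSum.IsInternal A) {i j : ι}
    (hij : j ≠ i) {x : M} (hx : x ∈ A j) : hA.proj i x = 0 := by
  simp [DirectSum.IsInternal.proj, ← DirectSum.apply_eq_component,
    hA.ofBijective_coeLinearMap_of_mem_ne hij hx]

theorem _root_.DirectSum.IsInternal.eq_zero_of_add_eq_zero (hA : DirectSum.IsInternal A)
    {i j : ι} (hij : i ≠ j) {x y : M} (hx : x ∈ A i) (hy : y ∈ A j) (h : x + y = 0) :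
    x = 0 ∧ y = 0 := by
  have hi := congrArg (hA.proj i) h
  have hj := congrArg (hA.proj j) h
  rw [map_add, hA.proj_of_mem hx, hA.proj_of_mem_ne hij.symm hy, add_zero, map_zero] at hi
  rw [map_add, hA.proj_of_mem_ne hij hx, hA.proj_of_mem hy, zero_add, map_zero] at hj
  exact ⟨hi, hj⟩

theorem _root_.DirectSum.IsInternal.eq_zero_of_add_add_eq_zero (hA : DirectSum.IsInternal A)
    {i j k : ι} (hij : i ≠ j) (hik : i ≠ k) (hjk : j ≠ k) {x y z : M} (hx : x ∈ A i)
    (hy : y ∈ A j) (hz : z ∈ A k) (h : x + y + z = 0) : x = 0 ∧ y = 0 ∧ z = 0 := by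
  have hi := congrArg (hA.proj i) h
  have hj := congrArg (hA.proj j) h
  have hk := congrArg (hA.proj k) h
  simp only [map_add, map_zero, hA.proj_of_mem hx, hA.proj_of_mem hy, hA.proj_of_mem hz,
    hA.proj_of_mem_ne hij hx, hA.proj_of_mem_ne hik hx, hA.proj_of_mem_ne hij.symm hy,
    hA.proj_of_mem_ne hjk hy, hA.proj_of_mem_ne hik.symm hz, hA.proj_of_mem_ne hjk.symm hz,
    add_zero, zero_add] at hi hj hk
  exact ⟨hi, hj, hk⟩

end Projection

section Subquotient

theorem finrank_le_add_of_map_le {V' : Type} [AddCommGroup V'] [Module K V'] (f : V →ₗ[K] V')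
    {s t : Submodule K V} {u : Submodule K V'} (hmap : s.map f ≤ u) (hker : s ⊓ ker f ≤ t)
    [FiniteDimensional K t] [FiniteDimensional K u] :
    finrank K s ≤ finrank K u + finrank K t := by
  have : FiniteDimensional K s := Module.Finite.iff_fg.mpr <|
    fg_of_fg_map_of_fg_inf_ker f (Module.Finite.iff_fg.mp (finiteDimensional_of_le hmap))
      (Module.Finite.iff_fg.mp (finiteDimensional_of_le hker))
  have hrange : finrank K (range (f.domRestrict s)) ≤ finrank K u := by
    rw [range_domRestrict]
    exact finrank_mono hmap
  have hkernel : finrank K (ker (f.domRestrict s)) ≤ finrank K t := by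
    rw [ker_domRestrict, (equivMapOfInjective _ s.injective_subtype _).finrank_eq,
      map_comap_subtype]
    exact finrank_mono hker
  have := finrank_range_add_finrank_ker (f.domRestrict s)
  omega

theorem map_mkQ_sup_self (N D : Submodule K V) : (N ⊔ D).map D.mkQ = N.map D.mkQ := by
  rw [Submodule.map_sup, mkQ_map_self, sup_bot_eq]

theorem hdim_eq_finrank_map_mkQ (N D : Submodule K V) : hdim N D = finrank K (N.map D.mkQ) := by
  have hker : ker (D.mkQ ∘ₗ N.subtype) = D.comap N.subtype := by
    rw [ker_comp, ker_mkQ]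
  have hrange : range (D.mkQ ∘ₗ N.subtype) = N.map D.mkQ := by
    rw [range_comp, range_subtype]
  rw [hdim, ← hrange, ← (quotEquivOfEq _ _ hker).finrank_eq]
  exact (quotKerEquivRange _).finrank_eq

theorem hdim_bot (N : Submodule K V) : hdim N ⊥ = finrank K N := by
  rw [hdim, comap_bot, ker_subtype]
  exact (quotEquivOfEqBot _ rfl).finrank_eq

theorem hdim_le_hdim {N D N' D' : Submodule K V} (hN : N ≤ N' ⊔ D) (hD : D' ≤ D)
    [FiniteDimensional K (N'.map D'.mkQ)] : hdim N D ≤ hdim N' D' := by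
  rw [hdim_eq_finrank_map_mkQ, hdim_eq_finrank_map_mkQ]
  have hfactor : N'.map D.mkQ = (N'.map D'.mkQ).map (factor hD) := by
    rw [← map_comp, factor_comp_mk]
  have hle : N.map D.mkQ ≤ N'.map D.mkQ := map_mkQ_sup_self N' D ▸ map_mono hN
  rw [hfactor] at hle
  exact (finrank_mono hle).trans (finrank_map_le _ _)

theorem le_sup_of_hdim_le {N N' D : Submodule K V} (hN : N ≤ N') (h : hdim N' D ≤ hdim N D)
    [FiniteDimensional K (N'.map D.mkQ)] : N' ≤ N ⊔ D := by
  rw [hdim_eq_finrank_map_mkQ, hdim_eq_finrank_map_mkQ] at h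
  have heq := eq_of_le_of_finrank_le (map_mono hN) h
  rw [sup_comm, ← comap_map_mkQ, heq, comap_map_mkQ]
  exact le_sup_right

end Subquotient

section DoubleComplex

variable {g : ℤ → ℤ → Submodule K V} {d1 d2 : V →ₗ[K] V}

theorem totDeg_zero {n : ℕ} (hbd : BoundedBy g n) : TotDeg g 0 = g 0 0 := by
  refine le_antisymm (iSup_le fun p => ?_) (le_iSup_of_le 0 le_rfl)
  rcases eq_or_ne p 0 with rfl | hp
  · exact le_rfl
  · rw [hbd p (0 - p) (by omega)]
    exact bot_le

theorem totDeg_one {n : ℕ} (hbd : BoundedBy g n) : TotDeg g 1 = g 1 0 ⊔ g 0 1 := by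
  refine le_antisymm (iSup_le fun p => ?_)
    (sup_le (le_iSup_of_le 1 le_rfl) (le_iSup_of_le 0 le_rfl))
  by_cases hp1 : p = 1
  · subst hp1; exact le_sup_left
  by_cases hp0 : p = 0
  · subst hp0; exact le_sup_right
  rw [hbd p (1 - p) (by omega)]
  exact bot_le

theorem DRPureDeg.dExact_of_dExact_add {k : ℤ} (hP : DRPureDeg g d1 d2 k) {p p' : ℤ}
    (hpp' : p ≠ p') {x y : V} (hx : x ∈ g p (k - p)) (hy : y ∈ g p' (k - p'))
    (hx1 : d1 x = 0) (hx2 : d2 x = 0) (hy1 : d1 y = 0) (hy2 : d2 y = 0)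
    (h : DExact g d1 d2 k (x + y)) : DExact g d1 d2 k x := by
  classical
  have hc : ∀ i ∈ ({p, p'} : Finset ℤ), (if i = p then x else y) ∈ g i (k - i) ∧
      d1 (if i = p then x else y) = 0 ∧ d2 (if i = p then x else y) = 0 := by
    intro i hi
    rcases Finset.mem_insert.mp hi with rfl | hi
    · simp [hx, hx1, hx2]
    rw [Finset.mem_singleton] at hi
    subst hi
    simp [hpp'.symm, hy, hy1, hy2]
  simpa using hP {p, p'} _ hc (by rwa [Finset.sum_pair hpp', if_pos rfl, if_neg hpp'.symm]) p
    (Finset.mem_insert_self p _)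

theorem dolbDim_eq_finrank {p q : ℤ} (h : g p (q - 1) = ⊥) :
    dolbDim g d2 p q = finrank K ↥(g p q ⊓ ker d2) := by
  rw [dolbDim, h, Submodule.map_bot, hdim_bot]

theorem aeppliDim_le_dolbDim {p q : ℤ}
    (h : g p q ⊓ ker (d1 ∘ₗ d2) ≤
      (g p q ⊓ ker d2) ⊔ (map d1 (g (p - 1) q) ⊔ map d2 (g p (q - 1))))
    [FiniteDimensional K ↥((g p q ⊓ ker d2).map (map d2 (g p (q - 1))).mkQ)] :
    aeppliDim g d1 d2 p q ≤ dolbDim g d2 p q :=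
  hdim_le_hdim h le_sup_right

namespace RealStructure

variable {c : V → V} {σ : K → K} (hreal : RealStructure g d1 d2 c σ)
include hreal

theorem map_zero : c 0 = 0 := by
  simpa using hreal.add 0 0

theorem map_d2 (x : V) : c (d2 x) = d1 (c x) := by
  have := congrArg c (hreal.d (c x))
  rwa [hreal.invol, hreal.invol, eq_comm] at this

theorem ker_d1_le_sup {p q : ℤ}
    (h : g q p ⊓ ker d2 ≤ (g q p ⊓ ker d1 ⊓ ker d2) ⊔ map d2 (g q (p - 1))) :
    g p q ⊓ ker d1 ≤ (g p q ⊓ ker d1 ⊓ ker d2) ⊔ map d1 (g (p - 1) q) := by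
  rintro α ⟨hα, hα1 : d1 α = 0⟩
  have hcα : c α ∈ g q p ⊓ ker d2 := by
    refine ⟨hreal.mem p q α hα, show d2 (c α) = 0 from ?_⟩
    rw [← hreal.d, hα1, hreal.map_zero]
  obtain ⟨v, ⟨⟨hv, hv1 : d1 v = 0⟩, hv2 : d2 v = 0⟩, _, ⟨f, hf, rfl⟩, hsum⟩ :=
    mem_sup.mp (h hcα)
  have hα_eq : α = c v + d1 (c f) := by
    rw [← hreal.map_d2, ← hreal.add, hsum, hreal.invol]
  rw [hα_eq]
  refine add_mem_sup ⟨⟨hreal.mem q p v hv, ?_⟩, ?_⟩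
    (mem_map_of_mem (hreal.mem q (p - 1) f hf))
  · show d1 (c v) = 0
    rw [← hreal.map_d2, hv2, hreal.map_zero]
  · show d2 (c v) = 0
    rw [← hreal.d, hv1, hreal.map_zero]

end RealStructure

namespace IsBigradedDC

variable (hdc : IsBigradedDC g d1 d2)
include hdc

theorem d1_mem' {p q p' : ℤ} (hp : p + 1 = p') {x : V} (hx : x ∈ g p q) : d1 x ∈ g p' q :=
  hp ▸ hdc.d1_mem p q x hx

theorem d2_mem' {p q q' : ℤ} (hq : q + 1 = q') {x : V} (hx : x ∈ g p q) : d2 x ∈ g p q' :=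
  hq ▸ hdc.d2_mem p q x hx

theorem d_sq (x : V) : (d1 + d2) ((d1 + d2) x) = 0 := by
  simp only [LinearMap.add_apply, map_add, hdc.d1_sq, hdc.d2_sq, zero_add, add_zero]
  rw [add_comm]
  exact hdc.anticomm x

theorem d1_eq_zero_and_d2_eq_zero {p q : ℤ} {x : V} (hx : x ∈ g p q) (h : (d1 + d2) x = 0) :
    d1 x = 0 ∧ d2 x = 0 :=
  hdc.internal.eq_zero_of_add_eq_zero (i := (p + 1, q)) (j := (p, q + 1)) (by simp)
    (hdc.d1_mem p q x hx) (hdc.d2_mem p q x hx) h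


theorem proj_mem_of_drFull {n : ℕ} (hbd : BoundedBy g n) (hFull : DRFull g d1 d2 1) {x : V}
    (hx : x ∈ TotDeg g 1) (hcl : (d1 + d2) x = 0) :
    hdc.internal.proj (0, 1) x ∈ (g 0 1 ⊓ ker d1 ⊓ ker d2) ⊔ map d2 (g 0 0) := by
  obtain ⟨s, c, hc, y, hy, rfl⟩ := hFull x hx hcl
  rw [sub_self, totDeg_zero hbd] at hy
  have hsum : ∀ p ∈ s, hdc.internal.proj (0, 1) (c p) = if p = 0 then c p else 0 := by
    intro p hp
    split_ifs with hp0
    · subst hp0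
      exact hdc.internal.proj_of_mem (by simpa using (hc 0 hp).1)
    · exact hdc.internal.proj_of_mem_ne (j := (p, 1 - p)) (by simp [hp0]) (hc p hp).1
  rw [map_add, map_add, map_sum, Finset.sum_congr rfl hsum, Finset.sum_ite_eq',
    hdc.internal.proj_of_mem_ne (j := (1, 0)) (by decide) (hdc.d1_mem' (by norm_num) hy),
    hdc.internal.proj_of_mem (hdc.d2_mem' (by norm_num) hy), zero_add]
  refine add_mem (mem_sup_left ?_) (mem_sup_right (mem_map_of_mem hy))
  split_ifs with hs
  · obtain ⟨hc0, hc1, hc2⟩ := hc 0 hs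
    exact ⟨⟨by simpa using hc0, hc1⟩, hc2⟩
  · exact zero_mem _

theorem mem_sup_of_proj_mem {n : ℕ} (hbd : BoundedBy g n) {x : V} (hx : x ∈ TotDeg g 1)
    (hcl : (d1 + d2) x = 0) (hpr : hdc.internal.proj (0, 1) x ∈ map d2 (g 0 0)) :
    x ∈ (g 1 0 ⊓ ker d1 ⊓ ker d2) ⊔ map (d1 + d2) (g 0 0) := by
  obtain ⟨f, hf, hbf⟩ := hpr
  rw [totDeg_one hbd] at hx
  obtain ⟨a, ha, b, hb, rfl⟩ := mem_sup.mp hx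
  rw [map_add, hdc.internal.proj_of_mem_ne (j := (1, 0)) (by decide) ha,
    hdc.internal.proj_of_mem hb, zero_add] at hbf
  have hr : a - d1 f ∈ g 1 0 := sub_mem ha (hdc.d1_mem' (by norm_num) hf)
  have hrcl : (d1 + d2) (a - d1 f) = 0 := by
    have : a - d1 f = a + b - (d1 + d2) f := by
      rw [LinearMap.add_apply, ← hbf]; abel
    rw [this, map_sub, hcl, hdc.d_sq, sub_zero]
  obtain ⟨hr1, hr2⟩ := hdc.d1_eq_zero_and_d2_eq_zero hr hrcl
  refine mem_sup.mpr ⟨a - d1 f, ⟨⟨hr, hr1⟩, hr2⟩, (d1 + d2) f, mem_map_of_mem hf, ?_⟩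
  rw [LinearMap.add_apply, ← hbf]
  abel

theorem bettiDim_one_le {n : ℕ} (hbd : BoundedBy g n) (hFull : DRFull g d1 d2 1)
    [FiniteDimensional K ↥(g 1 0 ⊓ ker d1 ⊓ ker d2)]
    [FiniteDimensional K ↥((g 0 1 ⊓ ker d1 ⊓ ker d2).map (map d2 (g 0 0)).mkQ)] :
    bettiDim g d1 d2 1 ≤
      hdim (g 0 1 ⊓ ker d1 ⊓ ker d2) (map d2 (g 0 0)) +
        finrank K ↥(g 1 0 ⊓ ker d1 ⊓ ker d2) := by
  have hD : map (d1 + d2) (g 0 0) ≤ (map d2 (g 0 0)).comap (hdc.internal.proj (0, 1)) := by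
    rintro _ ⟨f, hf, rfl⟩
    rw [mem_comap, LinearMap.add_apply, map_add,
      hdc.internal.proj_of_mem_ne (j := (1, 0)) (by decide) (hdc.d1_mem' (by norm_num) hf),
      hdc.internal.proj_of_mem (hdc.d2_mem' (by norm_num) hf), zero_add]
    exact mem_map_of_mem hf
  rw [bettiDim, sub_self, totDeg_zero hbd, hdim_eq_finrank_map_mkQ, hdim_eq_finrank_map_mkQ]
  -- rank–nullity for the map `H¹_dR → V ⧸ Im ∂̄` induced by the `(0,1)`-projection
  refine (finrank_le_add_of_map_le (mapQ _ _ _ hD) ?_ ?_).trans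
    (add_le_add_right (finrank_map_le (map (d1 + d2) (g 0 0)).mkQ _) _)
  · rw [← map_comp, mapQ_mkQ, map_comp, ← map_mkQ_sup_self (g 0 1 ⊓ ker d1 ⊓ ker d2)]
    exact map_mono (map_le_iff_le_comap.mpr fun x hx => hdc.proj_mem_of_drFull hbd hFull hx.1 hx.2)
  · rintro _ ⟨⟨x, hx, rfl⟩, hker⟩
    rw [SetLike.mem_coe, mem_ker, mkQ_apply, mapQ_apply, Quotient.mk_eq_zero] at hker
    rw [← map_mkQ_sup_self]
    exact mem_map_of_mem (hdc.mem_sup_of_proj_mem hbd hx.1 hx.2 hker)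

theorem le_sup_of_dolbDim_add_le_bettiDim {n : ℕ} (hbd : BoundedBy g n)
    (hFull : DRFull g d1 d2 1) [FiniteDimensional K ↥(g 1 0 ⊓ ker d2)]
    [FiniteDimensional K ↥((g 0 1 ⊓ ker d2).map (map d2 (g 0 0)).mkQ)]
    (h : dolbDim g d2 1 0 + dolbDim g d2 0 1 ≤ bettiDim g d1 d2 1) :
    g 0 1 ⊓ ker d2 ≤ (g 0 1 ⊓ ker d1 ⊓ ker d2) ⊔ map d2 (g 0 0) := by
  have hR : g 1 0 ⊓ ker d1 ⊓ ker d2 ≤ g 1 0 ⊓ ker d2 :=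
    inf_le_inf_right _ inf_le_left
  have hR' : g 0 1 ⊓ ker d1 ⊓ ker d2 ≤ g 0 1 ⊓ ker d2 :=
    inf_le_inf_right _ inf_le_left
  have : FiniteDimensional K ↥(g 1 0 ⊓ ker d1 ⊓ ker d2) := finiteDimensional_of_le hR
  have : FiniteDimensional K ↥((g 0 1 ⊓ ker d1 ⊓ ker d2).map (map d2 (g 0 0)).mkQ) :=
    finiteDimensional_of_le (map_mono hR')
  rw [dolbDim_eq_finrank (hbd 1 (0 - 1) (by norm_num)), dolbDim, sub_self] at h
  have hb := hdc.bettiDim_one_le hbd hFull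
  have hRQ := finrank_mono hR
  exact le_sup_of_hdim_le hR' (by omega)

theorem inf_ker_comp_le_sup {n : ℕ} (hbd : BoundedBy g n) (hPure : DRPureDeg g d1 d2 2)
    (hdol : g 0 1 ⊓ ker d2 ≤ (g 0 1 ⊓ ker d1 ⊓ ker d2) ⊔ map d2 (g 0 0)) :
    g 1 0 ⊓ ker (d1 ∘ₗ d2) ≤ (g 1 0 ⊓ ker d2) ⊔ (g 1 0 ⊓ ker d1) := by
  rintro α ⟨hα, hα12 : d1 (d2 α) = 0⟩
  have hα21 : d2 (d1 α) = 0 := by simpa [hα12] using hdc.anticomm α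
  have htot : TotDeg g (2 - 1) = g 1 0 ⊔ g 0 1 := by norm_num [totDeg_one hbd]
  -- `∂̄α` and `∂α` are `d`-closed of different types and add up to `dα`
  obtain ⟨y, hy, hy_eq⟩ := hPure.dExact_of_dExact_add (p := 1) (p' := 2) (by norm_num)
    (hdc.d2_mem' (by norm_num) hα) (hdc.d1_mem' (by norm_num) hα) hα12 (hdc.d2_sq α)
    (hdc.d1_sq α) hα21 ⟨α, htot ▸ mem_sup_left hα, add_comm _ _⟩
  rw [htot] at hy
  obtain ⟨y1, hy1, y0, hy0, rfl⟩ := mem_sup.mp hy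
  have hsum : d1 y1 + (d2 y1 + d1 y0 - d2 α) + d2 y0 = 0 := by
    rw [hy_eq, map_add, map_add]
    abel
  obtain ⟨h20, h11, h02⟩ := hdc.internal.eq_zero_of_add_add_eq_zero (i := (2, 0)) (j := (1, 1))
    (k := (0, 2)) (by decide) (by decide) (by decide) (hdc.d1_mem' (by norm_num) hy1)
    (sub_mem (add_mem (hdc.d2_mem' (by norm_num) hy1) (hdc.d1_mem' (by norm_num) hy0))
      (hdc.d2_mem' (by norm_num) hα))
    (hdc.d2_mem' (by norm_num) hy0) hsum
  obtain ⟨v, ⟨⟨-, hv1 : d1 v = 0⟩, -⟩, _, ⟨f, hf, rfl⟩, rfl⟩ :=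
    mem_sup.mp (hdol ⟨hy0, h02⟩)
  have hdf : d1 f ∈ g 1 0 := hdc.d1_mem' (by norm_num) hf
  rw [show α = (α - (y1 - d1 f)) + (y1 - d1 f) by abel]
  refine add_mem_sup ⟨sub_mem hα (sub_mem hy1 hdf), ?_⟩ ⟨sub_mem hy1 hdf, ?_⟩
  · rw [map_add, hv1, zero_add, sub_eq_zero] at h11
    calc d2 (α - (y1 - d1 f)) = d1 (d2 f) + d2 (d1 f) := by
          rw [map_sub, map_sub, ← h11]
          abel
      _ = 0 := hdc.anticomm f
  · show d1 (y1 - d1 f) = 0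
    rw [map_sub, h20, hdc.d1_sq, sub_zero]

end IsBigradedDC

end DoubleComplex

/-- Let `X` be a compact complex manifold with `b₁ = 4`,
`h^{1,0}_{∂̄} = h^{0,1}_{∂̄} = 2` and `h^{1,0}_A = 3`.  Then either `H¹_{DR}(X,ℂ)` or
`H²_{DR}(X,ℂ)` fails to be pure (pure = the `H^{p,q}_{DR}` are in direct sum and fill out
the whole space). -/
theorem statement7 {W : Type} [AddCommGroup W] [Module ℂ W]
    (g : ℤ → ℤ → Submodule ℂ W) (d1 d2 : W →ₗ[ℂ] W) (c : W → W) (n : ℕ)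
    (hdc : IsBigradedDC g d1 d2)
    (hreal : RealStructure g d1 d2 c (starRingEnd ℂ))
    (hbd : BoundedBy g n)
    (hb1 : bettiDim g d1 d2 1 = 4)
    (h10 : dolbDim g d2 1 0 = 2) (h01 : dolbDim g d2 0 1 = 2)
    (hA10 : aeppliDim g d1 d2 1 0 = 3) :
    ¬ (DRFull g d1 d2 1 ∧ DRPureDeg g d1 d2 1) ∨
      ¬ (DRFull g d1 d2 2 ∧ DRPureDeg g d1 d2 2) := by
  by_contra! h
  obtain ⟨⟨hFull1, -⟩, -, hPure2⟩ := h
  have hQ : finrank ℂ ↥(g 1 0 ⊓ ker d2) = 2 := by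
    rwa [← dolbDim_eq_finrank (hbd 1 (0 - 1) (by norm_num))]
  have : FiniteDimensional ℂ ↥(g 1 0 ⊓ ker d2) := Module.finite_of_finrank_pos (by omega)
  have : FiniteDimensional ℂ ↥((g 0 1 ⊓ ker d2).map (map d2 (g 0 0)).mkQ) := by
    rw [dolbDim, sub_self, hdim_eq_finrank_map_mkQ] at h01
    exact Module.finite_of_finrank_pos (by omega)
  have hdol := hdc.le_sup_of_dolbDim_add_le_bettiDim hbd hFull1 (by omega)
  have hd1 := hreal.ker_d1_le_sup (p := 1) (q := 0) (by rwa [sub_self])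
  have hA : aeppliDim g d1 d2 1 0 ≤ dolbDim g d2 1 0 := by
    refine aeppliDim_le_dolbDim ((hdc.inf_ker_comp_le_sup hbd hPure2 hdol).trans ?_)
    exact sup_le le_sup_left <| hd1.trans <| sup_le
      (le_sup_of_le_left (inf_le_inf_right _ inf_le_left)) (le_sup_of_le_right le_sup_left)
  omega

end Stmt7
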